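/- arXiv:1101.3989 — 2 statements merged into one kernel-verified Lean document; each statement's English description precedes it below -/
import Mathlib

section
/- Let G be a group, α: G → ℤ a homomorphism, and ρ: G → SL(2,ℂ) an α-binary-dihedral homomorphism. Then there exist an α-binary-dihedral homomorphism ρ': G → SL(2,ℂ) and a ℂ-linear isomorphism φ: sl₂(ℂ) → ℂ ⊕ ℂ² such that for every g ∈ G, the conjugated map φ ∘ Ad_{ρ(g)} ∘ φ⁻¹ is the direct sum of multiplication by (−1)^{α(g)} on the summand ℂ and the linear endomorphism of ℂ² given by the matrix i^{α(g)} · ρ'(g), where i = √−1. In other words, Ad ∘ ρ is conjugate, as a 3-dimensional complex representation of G, to the direct sum (−1)^{α(·)} ⊕ (√−1)^{α(·)} ρ'. -/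
/-!
For `A = ρ g`, diagonal or antidiagonal of determinant one, conjugation by `A` multiplies the
diagonal coordinate of `v ∈ sl₂(ℂ)` by `a₀₀a₁₁ + a₀₁a₁₀ = (-1)^α(g)` and maps the off-diagonal
coordinates `(v₀₁, v₁₀)` by `!![a₀₀², -a₀₁²; -a₁₀², a₁₁²]`. On such `A` this matrix is
multiplicative, and its determinant is `(-1)^α(g)`, so rescaling it by `√−1^(-α(g))` yields a
binary dihedral representation `ρ'` into `SL(2,ℂ)`.
-/

open Matrix

abbrev SL2C := Matrix.SpecialLinearGroup (Fin 2) ℂ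

/-- An element of `SL(2,ℂ)` is diagonal if its off-diagonal entries vanish. -/
def IsDiag' (A : SL2C) : Prop :=
  (A : Matrix (Fin 2) (Fin 2) ℂ) 0 1 = 0 ∧ (A : Matrix (Fin 2) (Fin 2) ℂ) 1 0 = 0

/-- An element of `SL(2,ℂ)` is antidiagonal if its diagonal entries vanish. -/
def IsAnti' (A : SL2C) : Prop :=
  (A : Matrix (Fin 2) (Fin 2) ℂ) 0 0 = 0 ∧ (A : Matrix (Fin 2) (Fin 2) ℂ) 1 1 = 0

/-- Given a homomorphism `α : G → ℤ`, a homomorphism `ρ : G → SL(2,ℂ)` is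
`α`-binary-dihedral if `ρ g` is diagonal whenever `α g` is even, and antidiagonal
whenever `α g` is odd. -/
def IsBinaryDihedral {G : Type} [Group G] (α : G → ℤ) (ρ : G →* SL2C) : Prop :=
  ∀ g : G, (Even (α g) → IsDiag' (ρ g)) ∧ (Odd (α g) → IsAnti' (ρ g))

/-- `sl₂(ℂ)`: the space of trace-free complex `2 × 2` matrices. -/
noncomputable def sl2C : Submodule ℂ (Matrix (Fin 2) (Fin 2) ℂ) :=
  LinearMap.ker (Matrix.traceLinearMap (Fin 2) ℂ ℂ)

namespace Matrix

variable {R : Type*} [CommRing R]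

def IsDiagOrAntidiag (A : Matrix (Fin 2) (Fin 2) R) : Prop :=
  (A 0 1 = 0 ∧ A 1 0 = 0) ∨ (A 0 0 = 0 ∧ A 1 1 = 0)

/-- For `A` diagonal or antidiagonal, `v ↦ A * v * adjugate A` maps the off-diagonal coordinates
`![v 0 1, v 1 0]` of `v` by this matrix. -/
def adOffDiag (A : Matrix (Fin 2) (Fin 2) R) : Matrix (Fin 2) (Fin 2) R :=
  !![A 0 0 ^ 2, -A 0 1 ^ 2; -A 1 0 ^ 2, A 1 1 ^ 2]

variable {A : Matrix (Fin 2) (Fin 2) R}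

theorem IsDiagOrAntidiag.adOffDiag_mul (hA : A.IsDiagOrAntidiag) (B : Matrix (Fin 2) (Fin 2) R) :
    adOffDiag (A * B) = adOffDiag A * adOffDiag B := by
  ext i j
  rcases hA with ⟨h01, h10⟩ | ⟨h00, h11⟩ <;>
    fin_cases i <;> fin_cases j <;>
    simp [adOffDiag, mul_apply, Fin.sum_univ_two, *] <;> ring

theorem det_adOffDiag (A : Matrix (Fin 2) (Fin 2) R) :
    (adOffDiag A).det = A.det * (A 0 0 * A 1 1 + A 0 1 * A 1 0) := by
  rw [adOffDiag, det_fin_two_of, det_fin_two]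
  ring

theorem IsDiagOrAntidiag.mul_mul_adjugate_apply_zero_zero (hA : A.IsDiagOrAntidiag)
    {v : Matrix (Fin 2) (Fin 2) R} (hv : v.trace = 0) :
    (A * v * adjugate A) 0 0 = (A 0 0 * A 1 1 + A 0 1 * A 1 0) * v 0 0 := by
  rw [trace_fin_two] at hv
  rw [adjugate_fin_two]
  rcases hA with ⟨h01, h10⟩ | ⟨h00, h11⟩ <;>
    simp [mul_apply, Fin.sum_univ_two, *]
  · ring
  · linear_combination (-A 0 1 * A 1 0) * hv

theorem IsDiagOrAntidiag.mul_mul_adjugate_offDiag (hA : A.IsDiagOrAntidiag)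
    (v : Matrix (Fin 2) (Fin 2) R) :
    ![(A * v * adjugate A) 0 1, (A * v * adjugate A) 1 0] = adOffDiag A *ᵥ ![v 0 1, v 1 0] := by
  rw [adjugate_fin_two]
  ext i
  rcases hA with ⟨h01, h10⟩ | ⟨h00, h11⟩ <;>
    fin_cases i <;> simp [adOffDiag, mul_apply, mulVec, dotProduct, Fin.sum_univ_two, *] <;> ring

end Matrix

theorem IsDiag'.mul_add_mul_eq_one {A : SL2C} (hA : IsDiag' A) :
    A 0 0 * A 1 1 + A 0 1 * A 1 0 = 1 := by
  have hdet := A.det_coe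
  rw [det_fin_two] at hdet
  simpa only [hA.1, hA.2, mul_zero, sub_zero, zero_mul, add_zero] using hdet

theorem IsAnti'.mul_add_mul_eq_neg_one {A : SL2C} (hA : IsAnti' A) :
    A 0 0 * A 1 1 + A 0 1 * A 1 0 = -1 := by
  have hdet := A.det_coe
  rw [det_fin_two] at hdet
  simp only [hA.1, hA.2, zero_mul, zero_sub] at hdet ⊢
  linear_combination -hdet

theorem Complex.I_zpow_neg_sq_mul_neg_one_zpow (n : ℤ) :
    (Complex.I ^ (-n)) ^ 2 * (-1 : ℂ) ^ n = 1 := by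
  have hsq : (Complex.I ^ (-n)) ^ 2 = (-1 : ℂ) ^ (-n) := by
    rw [← zpow_natCast, ← _root_.zpow_mul, Nat.cast_ofNat, mul_comm, _root_.zpow_mul, zpow_two,
      Complex.I_mul_I]
  rw [hsq, ← zpow_add₀ (by norm_num), neg_add_cancel, zpow_zero]

section BinaryDihedral

variable {G : Type} [Group G] {α : G → ℤ} {ρ : G →* SL2C}

theorem IsBinaryDihedral.isDiagOrAntidiag (hρ : IsBinaryDihedral α ρ) (g : G) :
    (ρ g : Matrix (Fin 2) (Fin 2) ℂ).IsDiagOrAntidiag :=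
  (Int.even_or_odd (α g)).elim (fun h => Or.inl ((hρ g).1 h)) (fun h => Or.inr ((hρ g).2 h))

theorem IsBinaryDihedral.neg_one_zpow_eq (hρ : IsBinaryDihedral α ρ) (g : G) :
    (-1 : ℂ) ^ α g = ρ g 0 0 * ρ g 1 1 + ρ g 0 1 * ρ g 1 0 := by
  rcases Int.even_or_odd (α g) with h | h
  · rw [h.neg_one_zpow, ((hρ g).1 h).mul_add_mul_eq_one]
  · rw [h.neg_one_zpow, ((hρ g).2 h).mul_add_mul_eq_neg_one]

theorem IsBinaryDihedral.det_I_zpow_smul_adOffDiag (hρ : IsBinaryDihedral α ρ) (g : G) :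
    (Complex.I ^ (-α g) • adOffDiag (ρ g : Matrix (Fin 2) (Fin 2) ℂ)).det = 1 := by
  have hdet : (ρ g : Matrix (Fin 2) (Fin 2) ℂ).det = 1 := (ρ g).2
  rw [det_smul, det_adOffDiag, hdet, ← hρ.neg_one_zpow_eq, Fintype.card_fin, one_mul,
    Complex.I_zpow_neg_sq_mul_neg_one_zpow]

theorem IsBinaryDihedral.I_zpow_smul_adOffDiag_mul (hρ : IsBinaryDihedral α ρ)
    (hα : ∀ a b : G, α (a * b) = α a + α b) (g h : G) :
    Complex.I ^ (-α (g * h)) • adOffDiag (ρ (g * h) : Matrix (Fin 2) (Fin 2) ℂ) =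
      (Complex.I ^ (-α g) • adOffDiag (ρ g : Matrix (Fin 2) (Fin 2) ℂ)) *
        (Complex.I ^ (-α h) • adOffDiag (ρ h : Matrix (Fin 2) (Fin 2) ℂ)) := by
  rw [_root_.map_mul, Matrix.SpecialLinearGroup.coe_mul, (hρ.isDiagOrAntidiag g).adOffDiag_mul, hα,
    neg_add, zpow_add₀ Complex.I_ne_zero, smul_mul_smul_comm]

variable (α ρ) in
/-- The representation `ρ'`: `Ad ∘ ρ` on the off-diagonal part of `sl₂(ℂ)`, twisted by
`√−1 ^ (−α)` to land in `SL(2,ℂ)`. -/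
noncomputable def dihedralTwist (hα : ∀ a b : G, α (a * b) = α a + α b)
    (hρ : IsBinaryDihedral α ρ) : G →* SL2C :=
  MonoidHom.mk' (fun g => ⟨Complex.I ^ (-α g) • adOffDiag (ρ g : Matrix (Fin 2) (Fin 2) ℂ),
    hρ.det_I_zpow_smul_adOffDiag g⟩) fun g h => Subtype.ext (hρ.I_zpow_smul_adOffDiag_mul hα g h)

variable (hα : ∀ a b : G, α (a * b) = α a + α b) (hρ : IsBinaryDihedral α ρ)

theorem coe_dihedralTwist_apply (g : G) :
    (dihedralTwist α ρ hα hρ g : Matrix (Fin 2) (Fin 2) ℂ) =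
      Complex.I ^ (-α g) • adOffDiag (ρ g : Matrix (Fin 2) (Fin 2) ℂ) :=
  rfl

theorem isBinaryDihedral_dihedralTwist : IsBinaryDihedral α (dihedralTwist α ρ hα hρ) := by
  intro g
  simp only [IsDiag', IsAnti', coe_dihedralTwist_apply]
  exact ⟨fun h => by simp [adOffDiag, ((hρ g).1 h).1, ((hρ g).1 h).2],
    fun h => by simp [adOffDiag, ((hρ g).2 h).1, ((hρ g).2 h).2]⟩

end BinaryDihedral

theorem sl2C_apply_one_one (v : sl2C) :
    (v : Matrix (Fin 2) (Fin 2) ℂ) 1 1 = -(v : Matrix (Fin 2) (Fin 2) ℂ) 0 0 := by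
  have hv : (v : Matrix (Fin 2) (Fin 2) ℂ).trace = 0 := v.2
  rw [trace_fin_two] at hv
  linear_combination hv

noncomputable def sl2CEquivProd : sl2C ≃ₗ[ℂ] ℂ × (Fin 2 → ℂ) where
  toFun v := ((v : Matrix (Fin 2) (Fin 2) ℂ) 0 0,
    ![(v : Matrix (Fin 2) (Fin 2) ℂ) 0 1, (v : Matrix (Fin 2) (Fin 2) ℂ) 1 0])
  invFun p := ⟨!![p.1, p.2 0; p.2 1, -p.1], by
    simp [sl2C, LinearMap.mem_ker, trace_fin_two_of]⟩
  map_add' v w := by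
    ext i
    · simp
    · fin_cases i <;> simp
  map_smul' c v := by
    ext i
    · simp
    · fin_cases i <;> simp
  left_inv v := by
    ext i j
    fin_cases i <;> fin_cases j <;> simp [sl2C_apply_one_one v]
  right_inv p := by
    ext i
    · simp
    · fin_cases i <;> simp

theorem sl2CEquivProd_apply (v : sl2C) :
    sl2CEquivProd v = ((v : Matrix (Fin 2) (Fin 2) ℂ) 0 0,
      ![(v : Matrix (Fin 2) (Fin 2) ℂ) 0 1, (v : Matrix (Fin 2) (Fin 2) ℂ) 1 0]) :=
  rfl

/-- for any `α`-binary-dihedral `ρ : G → SL(2,ℂ)` there are an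
`α`-binary-dihedral `ρ' : G → SL(2,ℂ)` and a `ℂ`-linear isomorphism
`φ : sl₂(ℂ) ≃ ℂ ⊕ ℂ²` conjugating `Ad ∘ ρ` to the direct sum of the character
`(−1)^{α(·)}` on `ℂ` and the representation `(√−1)^{α(·)} ρ'` on `ℂ²`. -/
theorem stmt6 (G : Type) [Group G] (α : G → ℤ) (hα : ∀ a b : G, α (a * b) = α a + α b)
    (ρ : G →* SL2C) (hρ : IsBinaryDihedral α ρ) :
    ∃ ρ' : G →* SL2C, IsBinaryDihedral α ρ' ∧
      ∃ φ : sl2C ≃ₗ[ℂ] ℂ × (Fin 2 → ℂ),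
        ∀ g : G, ∀ v w : sl2C,
          (w : Matrix (Fin 2) (Fin 2) ℂ) =
            (ρ g : Matrix (Fin 2) (Fin 2) ℂ) * (v : Matrix (Fin 2) (Fin 2) ℂ) *
              (((ρ g)⁻¹ : SL2C) : Matrix (Fin 2) (Fin 2) ℂ) →
          φ w = (((-1 : ℂ) ^ (α g)) * (φ v).1,
                 (Complex.I ^ (α g)) •
                   ((ρ' g : Matrix (Fin 2) (Fin 2) ℂ).mulVec (φ v).2)) := by
  refine ⟨dihedralTwist α ρ hα hρ, isBinaryDihedral_dihedralTwist hα hρ, sl2CEquivProd,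
    fun g v w hw => ?_⟩
  have hA := hρ.isDiagOrAntidiag g
  rw [Matrix.SpecialLinearGroup.coe_inv] at hw
  simp only [sl2CEquivProd_apply, coe_dihedralTwist_apply, hw, smul_mulVec, smul_smul,
    ← zpow_add₀ Complex.I_ne_zero, add_neg_cancel, zpow_zero, one_smul, hρ.neg_one_zpow_eq g,
    hA.mul_mul_adjugate_offDiag, hA.mul_mul_adjugate_apply_zero_zero v.2]
end

section
/- Let G be the group with presentation ⟨x₁, x₂, μ | μ x₁ μ⁻¹ = x₁ x₂⁻¹, μ x₂ x₁ μ⁻¹ = x₂⟩ (the Lin presentation of the figure eight knot group) and let ζ₅ = exp(2π√−1/5). Then for each k ∈ {1, 2} there exists a group homomorphism ρ_k: G → SL(2,ℂ) with ρ_k(x₁) = [[ζ₅^k,0],[0,ζ₅^{−k}]], ρ_k(x₂) = [[ζ₅^{2k},0],[0,ζ₅^{−2k}]], and ρ_k(μ) = J; each ρ_k is irreducible, and ρ₁ and ρ₂ are not conjugate in SL(2,ℂ). -/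
open Matrix

/-- The relators of the Lin presentation
`⟨x₁, x₂, μ | μ x₁ μ⁻¹ = x₁ x₂⁻¹, μ x₂ x₁ μ⁻¹ = x₂⟩` of the figure eight knot group,
with `x₁, x₂, μ` the generators `0, 1, 2`. -/
def fig8Rels : Set (FreeGroup (Fin 3)) :=
  { (FreeGroup.of 2) * (FreeGroup.of 0) * (FreeGroup.of 2)⁻¹ *
      ((FreeGroup.of 0) * (FreeGroup.of 1)⁻¹)⁻¹,
    (FreeGroup.of 2) * (FreeGroup.of 1) * (FreeGroup.of 0) * (FreeGroup.of 2)⁻¹ *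
      (FreeGroup.of 1)⁻¹ }

/-- The figure eight knot group via its Lin presentation. -/
def Fig8Group : Type := PresentedGroup fig8Rels

instance : Group Fig8Group := by unfold Fig8Group; infer_instance

/-!
Conjugation by `J = [[0,1],[-1,0]]` inverts diagonal matrices: `J diag(v) J⁻¹ = diag(v⁻¹)`.
Sending `x₁ ↦ diag(u, u⁻¹)`, `x₂ ↦ diag(u², u⁻²)`, `μ ↦ J`, the two Lin relators therefore map to
`diag(1)` and `diag(u⁻⁵)`, so this is a representation `ρ_u` as soon as `u⁵ = 1`; the theorem's
`ρ₁, ρ₂` are `ρ_ζ, ρ_{ζ²}`.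

A line invariant under `ρ_u` is a common eigenline of `diag(u, u⁻¹)` and `J`; for `u² ≠ 1` the
first has only the coordinate axes as eigenlines, and `J` swaps them. Conjugate representations have
equal traces, and `u + u⁻¹ = u² + u⁻²` amounts to `(u - 1)(u³ - 1) = 0`, hence `u³ = 1`, which is
impossible for a primitive fifth root of unity.
-/

open scoped MatrixGroups

namespace SL2

variable {R : Type*} [CommRing R]

noncomputable def diag : Rˣ →* SL(2, R) where
  toFun u := (⟨!![(u : R), 0; 0, ↑u⁻¹], by simp [det_fin_two_of]⟩ : SL(2, R))
  map_one' := Subtype.ext <| by simp [one_fin_two]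
  map_mul' u v := Subtype.ext <| by
    change _ = !![(u : R), 0; 0, ↑u⁻¹] * !![(v : R), 0; 0, ↑v⁻¹]
    simp [mul_comm]

lemma coe_diag (u : Rˣ) : (diag u : Matrix (Fin 2) (Fin 2) R) = !![(u : R), 0; 0, ↑u⁻¹] := rfl

lemma trace_diag (u : Rˣ) : trace (diag u : Matrix (Fin 2) (Fin 2) R) = u + ↑u⁻¹ := by
  simp [coe_diag, trace_fin_two_of]

def J : SL(2, R) := ⟨!![0, 1; -1, 0], by simp [det_fin_two_of]⟩

lemma coe_J : ((J : SL(2, R)) : Matrix (Fin 2) (Fin 2) R) = !![0, 1; -1, 0] := rfl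

lemma J_mul_diag_mul_J_inv (u : Rˣ) : J * diag u * J⁻¹ = diag (u⁻¹ : Rˣ) := by
  ext : 1
  simp [coe_diag, coe_J, adjugate_fin_two_of]

end SL2

section Fig8Rep

variable {R : Type*} [CommRing R]

noncomputable def fig8Gens (u : Rˣ) : Fin 3 → SL(2, R) := ![SL2.diag u, SL2.diag (u ^ 2), SL2.J]

lemma fig8Gens_rels {u : Rˣ} (hu : u ^ 5 = 1) :
    ∀ r ∈ fig8Rels, FreeGroup.lift (fig8Gens u) r = 1 := by
  rintro r (rfl | rfl) <;>
    simp only [map_mul, map_inv, FreeGroup.lift_apply_of, fig8Gens, cons_val]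
  · rw [SL2.J_mul_diag_mul_J_inv, ← map_inv, ← map_mul, ← map_inv, ← map_mul, ← map_one SL2.diag]
    congr 1
    group
  · rw [mul_assoc SL2.J, ← map_mul, SL2.J_mul_diag_mul_J_inv, ← map_inv, ← map_mul,
      ← map_one SL2.diag]
    congr 1
    rw [← mul_inv, ← pow_succ, ← pow_add, hu, inv_one]

noncomputable def fig8Rep {u : Rˣ} (hu : u ^ 5 = 1) : Fig8Group →* SL(2, R) :=
  PresentedGroup.toGroup (fig8Gens_rels hu)

lemma fig8Rep_of {u : Rˣ} (hu : u ^ 5 = 1) (i : Fin 3) :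
    fig8Rep hu (PresentedGroup.of i) = fig8Gens u i :=
  PresentedGroup.toGroup.of _

end Fig8Rep

lemma Matrix.SpecialLinearGroup.trace_conj {n R : Type*} [Fintype n] [DecidableEq n] [CommRing R]
    (P A : SpecialLinearGroup n R) :
    trace ((P * A * P⁻¹ : SpecialLinearGroup n R) : Matrix n n R) = trace (A : Matrix n n R) := by
  rw [coe_mul, coe_mul, trace_mul_cycle, ← coe_mul, inv_mul_cancel, coe_one, one_mul]

section Field

variable {K : Type*} [Field K]

lemma eq_of_diag_J_eigenvector {a b c d : K} {v : Fin 2 → K} (hv : v ≠ 0)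
    (hc : !![a, 0; 0, b] *ᵥ v = c • v) (hd : !![0, 1; -1, 0] *ᵥ v = d • v) : a = b := by
  have h0 : a * v 0 = c * v 0 := by simpa [vecHead, vecTail] using congrFun hc 0
  have h1 : b * v 1 = c * v 1 := by simpa [vecHead, vecTail] using congrFun hc 1
  have h2 : v 1 = d * v 0 := by simpa [vecHead, vecTail] using congrFun hd 0
  have h3 : -v 0 = d * v 1 := by simpa [vecHead, vecTail] using congrFun hd 1
  have hv0 : v 0 ≠ 0 := by
    intro h
    apply hv
    ext i
    fin_cases i <;> simp [h, h2]
  have hv1 : v 1 ≠ 0 := by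
    intro h
    apply hv0
    simpa [h] using h3
  calc a = c := mul_right_cancel₀ hv0 h0
    _ = b := (mul_right_cancel₀ hv1 h1).symm

lemma not_forall_mulVec_mem_of_diag_J {G : Type*} [Group G] (ρ : G →* SL(2, K)) {g h : G}
    {u : Kˣ} (hu : u ^ 2 ≠ 1) (hg : ρ g = SL2.diag u) (hh : ρ h = SL2.J)
    {W : Submodule K (Fin 2 → K)} (hW : Module.finrank K W = 1) :
    ¬ ∀ x : G, ∀ w ∈ W, (ρ x : Matrix (Fin 2) (Fin 2) K) *ᵥ w ∈ W := by
  intro hinv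
  obtain ⟨v, hv0, hspan⟩ := finrank_eq_one_iff'.mp hW
  obtain ⟨c, hc⟩ := hspan ⟨_, hinv g v v.2⟩
  obtain ⟨d, hd⟩ := hspan ⟨_, hinv h v v.2⟩
  have hc' : c • (v : Fin 2 → K) = (ρ g : Matrix (Fin 2) (Fin 2) K) *ᵥ v := congrArg Subtype.val hc
  have hd' : d • (v : Fin 2 → K) = (ρ h : Matrix (Fin 2) (Fin 2) K) *ᵥ v := congrArg Subtype.val hd
  rw [hg, SL2.coe_diag] at hc'
  rw [hh, SL2.coe_J] at hd'
  have huinv : (u : K) = ↑u⁻¹ :=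
    eq_of_diag_J_eigenvector (by simpa using hv0) hc'.symm hd'.symm
  exact hu (by rw [sq, mul_eq_one_iff_eq_inv]; exact Units.ext huinv)

lemma pow_three_eq_one_of_add_inv_eq_sq_add_inv {a : K} (ha : a ≠ 0)
    (h : a + a⁻¹ = a ^ 2 + (a ^ 2)⁻¹) : a ^ 3 = 1 := by
  have hfactor : (a - 1) * (a ^ 3 - 1) = 0 := by
    field_simp at h
    linear_combination -h
  rcases mul_eq_zero.mp hfactor with h1 | h3
  · rw [sub_eq_zero.mp h1, one_pow]
  · exact sub_eq_zero.mp h3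

end Field

lemma fig8Rep_spec {K : Type*} [Field K] {u : Kˣ} (hu : IsPrimitiveRoot u 5) :
    ((fig8Rep hu.pow_eq_one (PresentedGroup.of 0) : Matrix (Fin 2) (Fin 2) K) =
        !![(u : K), 0; 0, (u : K)⁻¹]) ∧
      ((fig8Rep hu.pow_eq_one (PresentedGroup.of 1) : Matrix (Fin 2) (Fin 2) K) =
        !![(u : K) ^ 2, 0; 0, ((u : K) ^ 2)⁻¹]) ∧
      ((fig8Rep hu.pow_eq_one (PresentedGroup.of 2) : Matrix (Fin 2) (Fin 2) K) =
        !![0, 1; -1, 0]) ∧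
      ∀ W : Submodule K (Fin 2 → K), Module.finrank K W = 1 →
        ¬ ∀ g : Fig8Group, ∀ w ∈ W,
          (fig8Rep hu.pow_eq_one g : Matrix (Fin 2) (Fin 2) K) *ᵥ w ∈ W := by
  refine ⟨?_, ?_, ?_, fun W hW ↦ not_forall_mulVec_mem_of_diag_J _
    (hu.pow_ne_one_of_pos_of_lt two_ne_zero (by norm_num)) (fig8Rep_of _ 0) (fig8Rep_of _ 2) hW⟩ <;>
    simp [fig8Rep_of, fig8Gens, SL2.coe_diag, SL2.coe_J, -map_pow]

lemma fig8Rep_sq_not_conj {K : Type*} [Field K] {u : Kˣ} (hu : IsPrimitiveRoot u 5)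
    (hu2 : (u ^ 2) ^ 5 = 1) :
    ¬ ∃ P : SL(2, K), ∀ g : Fig8Group, fig8Rep hu2 g = P * fig8Rep hu.pow_eq_one g * P⁻¹ := by
  rintro ⟨P, hP⟩
  have htr := congrArg (fun A : SL(2, K) ↦ trace (A : Matrix (Fin 2) (Fin 2) K))
    (hP (PresentedGroup.of 0))
  simp only [SpecialLinearGroup.trace_conj, fig8Rep_of, fig8Gens, cons_val_zero,
    SL2.trace_diag] at htr
  push_cast at htr
  exact (IsPrimitiveRoot.coe_units_iff.mpr hu).pow_ne_one_of_pos_of_lt three_ne_zero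
    (by norm_num) (pow_three_eq_one_of_add_inv_eq_sq_add_inv u.ne_zero htr.symm)

/-- with `ζ₅ = exp(2π√−1/5)`, for each `k ∈ {1,2}` there is a
homomorphism `ρₖ` from the Lin-presented figure eight knot group to `SL(2,ℂ)` with
`ρₖ(x₁) = diag(ζ₅ᵏ, ζ₅⁻ᵏ)`, `ρₖ(x₂) = diag(ζ₅²ᵏ, ζ₅⁻²ᵏ)`, `ρₖ(μ) = [[0,1],[-1,0]]`;
each `ρₖ` is irreducible, and `ρ₁, ρ₂` are not conjugate in `SL(2,ℂ)`. -/
theorem stmt13 (ζ : ℂ) (hζ : ζ = Complex.exp (2 * Real.pi * Complex.I / 5)) :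
    ∃ ρ₁ ρ₂ : Fig8Group →* SL2C,
      (∀ k : Fin 2, ∀ ρ : Fig8Group →* SL2C, ρ = [ρ₁, ρ₂].get k →
        ((ρ (PresentedGroup.of (0 : Fin 3)) : Matrix (Fin 2) (Fin 2) ℂ) =
          !![ζ ^ ((k : ℕ) + 1), 0; 0, (ζ ^ ((k : ℕ) + 1))⁻¹]) ∧
        ((ρ (PresentedGroup.of (1 : Fin 3)) : Matrix (Fin 2) (Fin 2) ℂ) =
          !![ζ ^ (2 * ((k : ℕ) + 1)), 0; 0, (ζ ^ (2 * ((k : ℕ) + 1)))⁻¹]) ∧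
        ((ρ (PresentedGroup.of (2 : Fin 3)) : Matrix (Fin 2) (Fin 2) ℂ) =
          !![0, 1; -1, 0]) ∧
        (∀ W : Submodule ℂ (Fin 2 → ℂ), Module.finrank ℂ W = 1 →
          ¬ ∀ g : Fig8Group, ∀ w ∈ W,
              (ρ g : Matrix (Fin 2) (Fin 2) ℂ).mulVec w ∈ W)) ∧
      ¬ ∃ P : SL2C, ∀ g : Fig8Group, ρ₂ g = P * ρ₁ g * P⁻¹ := by
  have hζ5 : IsPrimitiveRoot ζ 5 := by
    rw [hζ]
    exact_mod_cast Complex.isPrimitiveRoot_exp 5 (by norm_num)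
  obtain ⟨u, rfl⟩ := hζ5.isUnit (by norm_num)
  have hu : IsPrimitiveRoot u 5 := IsPrimitiveRoot.coe_units_iff.mp hζ5
  have hu2 : IsPrimitiveRoot (u ^ 2) 5 := hu.pow_of_coprime 2 (by norm_num)
  refine ⟨fig8Rep hu.pow_eq_one, fig8Rep hu2.pow_eq_one, ?_, fig8Rep_sq_not_conj hu _⟩
  intro k ρ hρ
  fin_cases k <;> subst hρ
  · simpa using fig8Rep_spec hu
  · simpa [← pow_mul] using fig8Rep_spec hu2
end
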